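/- Let X be standard Gaussian and g the bounded solution of g'(x) − x g(x) = h(x) − E[h(X)]. If h is bounded with κ₁ = sup h − inf h then |g'(x)| ≤ κ₁ (1 + |x| Φ(x)(1−Φ(x))/φ(x)) ≤ 2κ₁ for all x. -/

import Mathlib

open Real MeasureTheory Set

/-- Standard Gaussian pdf. -/
noncomputable def gaussPdf (x : ℝ) : ℝ := (Real.sqrt (2 * π))⁻¹ * Real.exp (-x ^ 2 / 2)

/-- Standard Gaussian cdf. -/
noncomputable def gaussCdf (x : ℝ) : ℝ := ∫ u in Set.Iic x, gaussPdf u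

/-!
With `J x = ∫_{-∞}^x (h - E h) φ` one has `g = J / φ`. Since `E (h - E h) = 0`, also
`J x = -∫_x^∞ (h - E h) φ`, so `J` is bounded both by `(sup h - E h) Φ(x)` and by
`(E h - inf h) (1 - Φ(x))`, whence `|J| ≤ κ₁ Φ (1 - Φ)`. Differentiating `J = g φ` gives
`g' = x g + J' / φ`, and `J' / φ` lies between `inf h - E h` and `sup h - E h` wherever `g` is
differentiable. The final bound is the Mills-ratio inequality `|x| Φ (1 - Φ) ≤ φ`, which follows
from `x (1 - Φ(x)) = ∫_x^∞ x φ ≤ ∫_x^∞ u φ(u) du = φ(x)` and the symmetry of `φ`.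
-/

open ProbabilityTheory Filter Topology

lemma gaussPdf_eq_gaussianPDFReal : gaussPdf = gaussianPDFReal 0 1 := by
  funext x
  simp [gaussPdf, gaussianPDFReal]

lemma gaussPdf_pos (x : ℝ) : 0 < gaussPdf x := by
  unfold gaussPdf
  positivity

lemma gaussPdf_neg (x : ℝ) : gaussPdf (-x) = gaussPdf x := by
  simp [gaussPdf]

lemma continuous_gaussPdf : Continuous gaussPdf := by
  unfold gaussPdf
  fun_prop

lemma integrable_gaussPdf : Integrable gaussPdf :=
  gaussPdf_eq_gaussianPDFReal ▸ integrable_gaussianPDFReal 0 1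

lemma integral_gaussPdf : ∫ x, gaussPdf x = 1 :=
  gaussPdf_eq_gaussianPDFReal ▸ integral_gaussianPDFReal_eq_one 0 one_ne_zero

lemma integrable_mul_gaussPdf : Integrable fun x => x * gaussPdf x := by
  have := (integrable_mul_exp_neg_mul_sq (b := 1 / 2) (by norm_num)).const_mul (√(2 * π))⁻¹
  convert this using 2 with x
  rw [gaussPdf]
  ring_nf

lemma hasDerivAt_gaussPdf (x : ℝ) : HasDerivAt gaussPdf (-x * gaussPdf x) x := by
  have hexp : HasDerivAt (fun y : ℝ => -y ^ 2 / 2) (-x) x :=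
    ((hasDerivAt_pow 2 x).neg.div_const 2).congr_deriv (by push_cast; ring)
  exact (hexp.exp.const_mul _).congr_deriv (by rw [gaussPdf]; ring)

lemma tendsto_gaussPdf_atTop : Tendsto gaussPdf atTop (𝓝 0) := by
  have hsq : Tendsto (fun x : ℝ => x ^ 2 / 2) atTop atTop :=
    (tendsto_pow_atTop two_ne_zero).atTop_div_const two_pos
  have := (tendsto_exp_neg_atTop_nhds_zero.comp hsq).const_mul (√(2 * π))⁻¹
  rw [mul_zero] at this
  convert this using 2 with x
  simp only [gaussPdf, Function.comp, neg_div]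

lemma integral_Ioi_mul_gaussPdf (a : ℝ) : ∫ u in Ioi a, u * gaussPdf u = gaussPdf a := by
  have := integral_Ioi_of_hasDerivAt_of_tendsto' (f := -gaussPdf) (a := a)
    (fun x _ => by simpa using (hasDerivAt_gaussPdf x).neg) integrable_mul_gaussPdf.integrableOn
    tendsto_gaussPdf_atTop.neg
  simpa using this

lemma one_sub_gaussCdf (x : ℝ) : 1 - gaussCdf x = ∫ u in Ioi x, gaussPdf u := by
  rw [← integral_gaussPdf, ← intervalIntegral.integral_Iic_add_Ioi integrable_gaussPdf.integrableOn
    integrable_gaussPdf.integrableOn, gaussCdf, add_sub_cancel_left]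

lemma gaussCdf_neg (x : ℝ) : gaussCdf (-x) = 1 - gaussCdf x := by
  rw [one_sub_gaussCdf, gaussCdf, ← integral_comp_neg_Ioi]
  simp_rw [gaussPdf_neg]

lemma gaussCdf_nonneg (x : ℝ) : 0 ≤ gaussCdf x :=
  setIntegral_nonneg measurableSet_Iic fun u _ => (gaussPdf_pos u).le

lemma gaussCdf_le_one (x : ℝ) : gaussCdf x ≤ 1 := by
  have := one_sub_gaussCdf x ▸ setIntegral_nonneg measurableSet_Ioi fun u _ => (gaussPdf_pos u).le
  linarith

lemma hasDerivAt_gaussCdf (x : ℝ) : HasDerivAt gaussCdf (gaussPdf x) x := by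
  have hrep : gaussCdf = fun y => gaussCdf 0 + ∫ u in (0 : ℝ)..y, gaussPdf u := by
    funext y
    rw [← intervalIntegral.integral_Iic_sub_Iic integrable_gaussPdf.integrableOn
      integrable_gaussPdf.integrableOn, gaussCdf, gaussCdf, add_sub_cancel]
  rw [hrep]
  exact (continuous_gaussPdf.integral_hasStrictDerivAt 0 x).hasDerivAt.const_add _

lemma mul_one_sub_gaussCdf_le (x : ℝ) : x * (1 - gaussCdf x) ≤ gaussPdf x := by
  rw [one_sub_gaussCdf, ← integral_const_mul, ← integral_Ioi_mul_gaussPdf x]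
  refine setIntegral_mono_on (integrable_gaussPdf.const_mul x).integrableOn
    integrable_mul_gaussPdf.integrableOn measurableSet_Ioi fun u hu => ?_
  exact mul_le_mul_of_nonneg_right (le_of_lt hu) (gaussPdf_pos u).le

lemma abs_mul_gaussCdf_mul_one_sub_le (x : ℝ) :
    |x| * (gaussCdf x * (1 - gaussCdf x)) ≤ gaussPdf x := by
  wlog hx : 0 ≤ x generalizing x
  · simpa [gaussCdf_neg, gaussPdf_neg, mul_comm (gaussCdf x)] using this (-x) (by linarith)
  rw [abs_of_nonneg hx, mul_left_comm]
  calc gaussCdf x * (x * (1 - gaussCdf x)) ≤ 1 * gaussPdf x :=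
        mul_le_mul (gaussCdf_le_one x) (mul_one_sub_gaussCdf_le x)
          (mul_nonneg hx (by linarith [gaussCdf_le_one x])) zero_le_one
    _ = gaussPdf x := one_mul _

lemma exp_mul_setIntegral_Iic_eq (k : ℝ → ℝ) (x : ℝ) :
    exp (x ^ 2 / 2) * ∫ u in Iic x, k u * exp (-u ^ 2 / 2)
      = (∫ u in Iic x, k u * gaussPdf u) / gaussPdf x := by
  simp only [gaussPdf, mul_left_comm (k _), integral_const_mul]
  rw [mul_div_mul_left _ _ (by positivity), neg_div, exp_neg, div_inv_eq_mul, mul_comm]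

lemma setIntegral_mul_gaussPdf_le {k : ℝ → ℝ} {a : ℝ} (hk : Integrable fun u => k u * gaussPdf u)
    (ha : ∀ u, k u ≤ a) (s : Set ℝ) :
    ∫ u in s, k u * gaussPdf u ≤ a * ∫ u in s, gaussPdf u := by
  rw [← integral_const_mul]
  exact setIntegral_mono hk.integrableOn (integrable_gaussPdf.const_mul a).integrableOn
    fun u => mul_le_mul_of_nonneg_right (ha u) (gaussPdf_pos u).le

lemma integrable_neg_mul_gaussPdf {k : ℝ → ℝ} (hk : Integrable fun u => k u * gaussPdf u) :
    Integrable fun u => (-k) u * gaussPdf u := by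
  simpa only [Pi.neg_def, neg_mul] using hk.neg

lemma setIntegral_neg_mul_gaussPdf (k : ℝ → ℝ) (s : Set ℝ) :
    ∫ u in s, (-k) u * gaussPdf u = -∫ u in s, k u * gaussPdf u := by
  simp only [Pi.neg_apply, neg_mul, integral_neg]

section CenteredIntegral

variable {k : ℝ → ℝ} {a b : ℝ}

lemma setIntegral_Iic_mul_gaussPdf_le (hk : Integrable fun u => k u * gaussPdf u)
    (hk₀ : ∫ u, k u * gaussPdf u = 0) (ha : ∀ u, k u ≤ a) (hb : ∀ u, -b ≤ k u) (x : ℝ) :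
    ∫ u in Iic x, k u * gaussPdf u ≤ (a + b) * (gaussCdf x * (1 - gaussCdf x)) := by
  set J := ∫ u in Iic x, k u * gaussPdf u
  have hJa : J ≤ a * gaussCdf x := setIntegral_mul_gaussPdf_le hk ha _
  have hJb : J ≤ b * (1 - gaussCdf x) := by
    have hsplit := intervalIntegral.integral_Iic_add_Ioi (b := x) hk.integrableOn hk.integrableOn
    have htail := setIntegral_mul_gaussPdf_le (integrable_neg_mul_gaussPdf hk)
      (fun u => neg_le.mp (hb u)) (Ioi x)
    rw [setIntegral_neg_mul_gaussPdf, ← one_sub_gaussCdf] at htail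
    linarith
  have hΦ₀ := gaussCdf_nonneg x
  have hΦ₁ := gaussCdf_le_one x
  -- `J = J Φ + J (1 - Φ)`, and each term is bounded using the other factor
  nlinarith [mul_le_mul_of_nonneg_right hJa (sub_nonneg.mpr hΦ₁),
    mul_le_mul_of_nonneg_right hJb hΦ₀]

lemma abs_setIntegral_Iic_mul_gaussPdf_le (hk : Integrable fun u => k u * gaussPdf u)
    (hk₀ : ∫ u, k u * gaussPdf u = 0) (ha : ∀ u, k u ≤ a) (hb : ∀ u, -b ≤ k u) (x : ℝ) :
    |∫ u in Iic x, k u * gaussPdf u| ≤ (a + b) * (gaussCdf x * (1 - gaussCdf x)) := by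
  have hneg := setIntegral_Iic_mul_gaussPdf_le (k := -k) (a := b) (b := a)
    (integrable_neg_mul_gaussPdf hk) (by rw [← setIntegral_univ, setIntegral_neg_mul_gaussPdf,
      setIntegral_univ, hk₀, neg_zero]) (fun u => neg_le.mp (hb u)) (fun u => neg_le_neg (ha u)) x
  rw [setIntegral_neg_mul_gaussPdf] at hneg
  rw [abs_le]
  exact ⟨by linarith, setIntegral_Iic_mul_gaussPdf_le hk hk₀ ha hb x⟩

lemma le_mul_gaussPdf_of_hasDerivAt_setIntegral_Iic (hk : Integrable fun u => k u * gaussPdf u)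
    (ha : ∀ u, k u ≤ a) {D x : ℝ}
    (hD : HasDerivAt (fun y => ∫ u in Iic y, k u * gaussPdf u) D x) : D ≤ a * gaussPdf x := by
  have hdiff : Integrable fun u => (a - k u) * gaussPdf u := by
    simpa only [sub_mul] using (integrable_gaussPdf.const_mul a).sub' hk
  have hrep : ∀ y, a * gaussCdf y - ∫ u in Iic y, k u * gaussPdf u
      = ∫ u in Iic y, (a - k u) * gaussPdf u := fun y => by
    rw [gaussCdf, ← integral_const_mul,
      ← integral_sub (integrable_gaussPdf.const_mul a).integrableOn hk.integrableOn]
    simp only [sub_mul]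
  have hmono : Monotone fun y => a * gaussCdf y - ∫ u in Iic y, k u * gaussPdf u := by
    intro y z hyz
    simp only [hrep]
    exact setIntegral_mono_set hdiff.integrableOn
      (ae_of_all _ fun u => mul_nonneg (sub_nonneg.mpr (ha u)) (gaussPdf_pos u).le)
      (Iic_subset_Iic.mpr hyz).eventuallyLE
  have hderiv : HasDerivAt (fun y => a * gaussCdf y - ∫ u in Iic y, k u * gaussPdf u)
      (a * gaussPdf x - D) x := ((hasDerivAt_gaussCdf x).const_mul a).sub hD
  have := hmono.deriv_nonneg (x := x)
  rw [hderiv.deriv] at this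
  linarith

lemma abs_deriv_div_gaussPdf_le (hk : Integrable fun u => k u * gaussPdf u)
    (hk₀ : ∫ u, k u * gaussPdf u = 0) (ha : ∀ u, k u ≤ a) (hb : ∀ u, -b ≤ k u)
    (ha₀ : 0 ≤ a) (hb₀ : 0 ≤ b) (x : ℝ) :
    |deriv (fun y => (∫ u in Iic y, k u * gaussPdf u) / gaussPdf y) x|
      ≤ (a + b) * (1 + |x| * (gaussCdf x * (1 - gaussCdf x) / gaussPdf x)) := by
  set G := fun y => (∫ u in Iic y, k u * gaussPdf u) / gaussPdf y
  have hφ := gaussPdf_pos x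
  have hG : |G x| ≤ (a + b) * (gaussCdf x * (1 - gaussCdf x) / gaussPdf x) := by
    rw [abs_div, abs_of_pos hφ, mul_div_assoc']
    exact div_le_div_of_nonneg_right (abs_setIntegral_Iic_mul_gaussPdf_le hk hk₀ ha hb x) hφ.le
  by_cases hdiff : DifferentiableAt ℝ G x
  swap
  -- `deriv G x = 0` here
  · rw [deriv_zero_of_not_differentiableAt hdiff, abs_zero]
    have := abs_nonneg (G x)
    have := abs_nonneg x
    nlinarith
  have hJ : HasDerivAt (fun y => ∫ u in Iic y, k u * gaussPdf u)
      (deriv G x * gaussPdf x + G x * (-x * gaussPdf x)) x := by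
    have hJG : (fun y => ∫ u in Iic y, k u * gaussPdf u) = fun y => G y * gaussPdf y :=
      funext fun y => (div_mul_cancel₀ _ (gaussPdf_pos y).ne').symm
    rw [hJG]
    exact hdiff.hasDerivAt.mul (hasDerivAt_gaussPdf x)
  have hup := le_mul_gaussPdf_of_hasDerivAt_setIntegral_Iic hk ha hJ
  have hlow := le_mul_gaussPdf_of_hasDerivAt_setIntegral_Iic (integrable_neg_mul_gaussPdf hk)
    (fun u => neg_le.mp (hb u)) (by simp only [setIntegral_neg_mul_gaussPdf]; exact hJ.neg)
  have hres : |deriv G x - x * G x| ≤ a + b := by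
    rw [abs_le]
    constructor <;> nlinarith
  calc |deriv G x| ≤ |deriv G x - x * G x| + |x| * |G x| := by
        simpa [abs_mul] using abs_add_le (deriv G x - x * G x) (x * G x)
    _ ≤ (a + b) + |x| * ((a + b) * (gaussCdf x * (1 - gaussCdf x) / gaussPdf x)) := by
        gcongr
    _ = _ := by ring

end CenteredIntegral

section Bounded

variable {h : ℝ → ℝ} {m M : ℝ}

lemma integrable_mul_gaussPdf_of_le (hh : Measurable h) (hm : ∀ u, m ≤ h u)
    (hM : ∀ u, h u ≤ M) : Integrable fun u => h u * gaussPdf u :=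
  integrable_gaussPdf.bdd_mul hh.aestronglyMeasurable
    (ae_of_all _ fun u => abs_le_max_abs_abs (hm u) (hM u))

lemma integral_mul_gaussPdf_mem_Icc (hint : Integrable fun u => h u * gaussPdf u)
    (hm : ∀ u, m ≤ h u) (hM : ∀ u, h u ≤ M) : ∫ u, h u * gaussPdf u ∈ Icc m M := by
  have hup := setIntegral_mul_gaussPdf_le hint hM univ
  have hlow := setIntegral_mul_gaussPdf_le (integrable_neg_mul_gaussPdf hint)
    (fun u => neg_le_neg (hm u)) univ
  rw [setIntegral_neg_mul_gaussPdf] at hlow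
  simp only [setIntegral_univ, integral_gaussPdf, mul_one] at hup hlow
  exact ⟨by linarith, hup⟩

lemma integral_sub_integral_mul_gaussPdf (hint : Integrable fun u => h u * gaussPdf u) :
    ∫ u, (h u - ∫ v, h v * gaussPdf v) * gaussPdf u = 0 := by
  simp only [sub_mul]
  rw [integral_sub hint (integrable_gaussPdf.const_mul _), integral_const_mul, integral_gaussPdf,
    mul_one, sub_self]

end Bounded

/-- Bound on the derivative of the solution of the Gaussian Stein equation for bounded `h`:
`|g'(x)| ≤ κ₁ (1 + |x| Φ(x)(1-Φ(x))/φ(x)) ≤ 2κ₁`, with `κ₁ = sup h - inf h`. -/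
theorem stmt4 (h : ℝ → ℝ) (hmeas : Measurable h)
    (hbdd : BddAbove (Set.range h)) (hbdd' : BddBelow (Set.range h))
    (κ₁ : ℝ) (hκ₁ : κ₁ = (⨆ y, h y) - ⨅ y, h y)
    (g : ℝ → ℝ)
    (hg : ∀ x, g x = Real.exp (x ^ 2 / 2) *
      ∫ u in Set.Iic x, (h u - ∫ v, h v * gaussPdf v) * Real.exp (-u ^ 2 / 2)) :
    ∀ x : ℝ,
      |deriv g x| ≤ κ₁ * (1 + |x| * (gaussCdf x * (1 - gaussCdf x) / gaussPdf x)) ∧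
      κ₁ * (1 + |x| * (gaussCdf x * (1 - gaussCdf x) / gaussPdf x)) ≤ 2 * κ₁ := by
  intro x
  set c := ∫ v, h v * gaussPdf v
  have hM : ∀ u, h u ≤ ⨆ y, h y := fun u => le_ciSup hbdd u
  have hm : ∀ u, ⨅ y, h y ≤ h u := fun u => ciInf_le hbdd' u
  have hint := integrable_mul_gaussPdf_of_le hmeas hm hM
  obtain ⟨hmc, hcM⟩ := integral_mul_gaussPdf_mem_Icc hint hm hM
  have hk : Integrable fun u => (h u - c) * gaussPdf u := by
    simpa only [sub_mul] using hint.sub' (integrable_gaussPdf.const_mul c)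
  have hg' : g = fun y => (∫ u in Iic y, (h u - c) * gaussPdf u) / gaussPdf y :=
    funext fun y => (hg y).trans (exp_mul_setIntegral_Iic_eq _ y)
  have hmills : |x| * (gaussCdf x * (1 - gaussCdf x) / gaussPdf x) ≤ 1 := by
    rw [← mul_div_assoc, div_le_one (gaussPdf_pos x)]
    exact abs_mul_gaussCdf_mul_one_sub_le x
  have hκ : κ₁ = ((⨆ y, h y) - c) + (c - ⨅ y, h y) := by rw [hκ₁]; ring
  refine ⟨?_, by nlinarith⟩
  rw [hg', hκ]
  exact abs_deriv_div_gaussPdf_le hk (integral_sub_integral_mul_gaussPdf hint)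
    (fun u => by linarith [hM u]) (fun u => by linarith [hm u]) (by linarith) (by linarith) x
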